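/- arXiv:2508.21412 — 3 statements merged into one kernel-verified Lean document; each statement's English description precedes it below -/
import Mathlib

section
/- Under the separate-sampling model, if X = U_G(·,I) C U_T(·,𝓕)^T with rank(U_G(S_G,I)) = |I| = |S_G| and rank(U_T(S_T,𝓕)) = |𝓕| = |S_T|, then C = (U_G(S_G,I))^{-1} X(S_G,S_T) (U_T(S_T,𝓕)^T)^{-1}, giving an explicit perfect reconstruction formula. -/
open Matrix

/-- explicit perfect reconstruction for separate sampling:
C = (U_G(S_G,I))⁻¹ X(S_G,S_T) (U_T(S_T,𝓕)ᵀ)⁻¹. -/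
theorem stmt8 {N T k l : ℕ}
    (U_G : Matrix (Fin N) (Fin N) ℂ) (U_T : Matrix (Fin T) (Fin T) ℂ)
    (rI : Fin k → Fin N) (hrI : Function.Injective rI)
    (rF : Fin l → Fin T) (hrF : Function.Injective rF)
    (sG : Fin k → Fin N) (hsG : Function.Injective sG)
    (sT : Fin l → Fin T) (hsT : Function.Injective sT)
    (hG : IsUnit (U_G.submatrix sG rI))
    (hT : IsUnit (U_T.submatrix sT rF))
    (C : Matrix (Fin k) (Fin l) ℂ)
    (X : Matrix (Fin N) (Fin T) ℂ)
    (hX : X = U_G.submatrix id rI * C * (U_T.submatrix id rF)ᵀ) :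
    C = (U_G.submatrix sG rI)⁻¹ * X.submatrix sG sT * ((U_T.submatrix sT rF)ᵀ)⁻¹ := by
  subst hX
  have key : (U_G.submatrix id rI * C * (U_T.submatrix id rF)ᵀ).submatrix sG sT
      = U_G.submatrix sG rI * C * (U_T.submatrix sT rF)ᵀ := by
    rw [Matrix.submatrix_mul _ _ sG id sT Function.bijective_id,
        Matrix.submatrix_mul _ _ sG id id Function.bijective_id]
    simp [Matrix.submatrix_submatrix, Matrix.transpose_submatrix]
  rw [key]
  have hGd : IsUnit (U_G.submatrix sG rI).det := (Matrix.isUnit_iff_isUnit_det _).mp hG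
  have hTd : IsUnit ((U_T.submatrix sT rF)ᵀ).det := by
    rw [Matrix.det_transpose]; exact (Matrix.isUnit_iff_isUnit_det _).mp hT
  rw [Matrix.mul_assoc (U_G.submatrix sG rI) C,
      Matrix.nonsing_inv_mul_cancel_left _ _ hGd,
      Matrix.mul_nonsing_inv_cancel_right _ _ hTd]
end

section
/- For a JBL FTVGS model class with spectral support 𝒩 of size B, there exists a stable sampling set S with exactly B samples, achieving the critical sampling ratio R_F(S) = B/(NT); moreover the vertices used satisfy |S_G| ≤ B_G. -/
/-!
Vectors supported on `𝒩` form a `B`-dimensional space on which sampling at every entry of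
`U_G ⊗ U_T` is injective, since the matrix is invertible; the sampling functionals then span the
dual space, and any `B` of them forming a basis of it give a sampling set of size `B`.
To use few vertices, first choose `B_G = |I|` vertices `V'` whose rows of `U_G` determine every
vector supported on `I`. Because `(U_G ⊗ U_T) z = U_G Z U_Tᵀ` for `Z` the `N × T` matrix of `z`,
the samples on `V' × (all times)` already determine every vector supported on `I × 𝓕 ⊇ 𝒩`, so the
`B` samples can be taken there.
-/

open Matrix Finset Kronecker Module

namespace Module.Dual

variable {K V ι : Type*} [Field K] [AddCommGroup V] [Module K V] [FiniteDimensional K V]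

theorem span_range_eq_top_iff (φ : ι → Dual K V) :
    Submodule.span K (Set.range φ) = ⊤ ↔ ∀ v, (∀ i, φ i v = 0) → v = 0 := by
  have hco : ∀ v, v ∈ (Submodule.span K (Set.range φ)).dualCoannihilator ↔ ∀ i, φ i v = 0 :=
    fun v => by rw [← SetLike.mem_coe, Submodule.coe_dualCoannihilator_span]; simp
  constructor
  · intro h v hv
    simpa [h] using (hco v).2 hv
  · intro h
    rw [← Subspace.dualCoannihilator_dualAnnihilator_eq (W := Submodule.span K (Set.range φ)),
      (Submodule.eq_bot_iff _).2 fun v hv => h v ((hco v).1 hv), Submodule.dualAnnihilator_bot]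

theorem exists_finset_card_eq_finrank (φ : ι → Dual K V) (R : Set ι)
    (hR : ∀ v, (∀ i ∈ R, φ i v = 0) → v = 0) :
    ∃ S : Finset ι, ↑S ⊆ R ∧ S.card = finrank K V ∧ ∀ v, (∀ i ∈ S, φ i v = 0) → v = 0 := by
  classical
  obtain ⟨κ, a, ha, hspan, hli⟩ := exists_linearIndependent' K fun i : R => φ i
  rw [(span_range_eq_top_iff fun i : R => φ i).2 fun v hv => hR v fun i hi => hv ⟨i, hi⟩] at hspan
  have := hli.finite
  cases nonempty_fintype κ
  have hcard : Fintype.card κ = finrank K V := by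
    rw [← Subspace.dual_finrank_eq, ← finrank_top K (Dual K V), ← hspan, finrank_span_eq_card hli]
  refine ⟨univ.image (Subtype.val ∘ a), ?_, ?_, fun v hv => ?_⟩
  · simp [Set.subset_def]
  · rw [card_image_of_injective _ (Subtype.val_injective.comp ha), card_univ, hcard]
  · exact (span_range_eq_top_iff _).1 hspan v fun k => hv _ (mem_image_of_mem _ (mem_univ k))

end Module.Dual

namespace Matrix

variable {K m n m' n' : Type*} [Fintype n] [Fintype n']

theorem kronecker_mulVec_apply [CommSemiring K] (A : Matrix m n K) (B : Matrix m' n' K)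
    (z : n × n' → K) (v : m) (t : m') :
    ((A ⊗ₖ B) *ᵥ z) (v, t) = (A *ᵥ fun i => (B *ᵥ fun j => z (i, j)) t) v := by
  simp only [mulVec, dotProduct, kroneckerMap_apply, Fintype.sum_prod_type, Finset.mul_sum,
    mul_assoc]

def IsSamplingSet [CommRing K] (A : Matrix m n K) (Ω : Finset n) (S : Finset m) : Prop :=
  ∀ z : n → K, (∀ j ∉ Ω, z j = 0) → (∀ i ∈ S, (A *ᵥ z) i = 0) → z = 0

namespace IsSamplingSet

section CommRing

variable [CommRing K] {A : Matrix m n K} {Ω Ω' : Finset n} {S : Finset m}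

theorem univ_of_mul_eq_one [Fintype m] [DecidableEq n] {B : Matrix n m K} (hBA : B * A = 1)
    (Ω : Finset n) : A.IsSamplingSet Ω univ := fun z _ hz => by
  rw [← one_mulVec z, ← hBA, ← mulVec_mulVec,
    show A *ᵥ z = 0 from funext fun i => hz i (mem_univ i), mulVec_zero]

theorem of_support_subset (h : A.IsSamplingSet Ω S) (hΩ : Ω' ⊆ Ω) : A.IsSamplingSet Ω' S :=
  fun z hz => h z fun j hj => hz j fun hj' => hj (hΩ hj')

theorem eq_of_mulVec_eq_on (h : A.IsSamplingSet Ω S) {y y' : n → K} (hy : ∀ j ∉ Ω, y j = 0)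
    (hy' : ∀ j ∉ Ω, y' j = 0) (hyy' : ∀ i ∈ S, (A *ᵥ y) i = (A *ᵥ y') i) : y = y' :=
  sub_eq_zero.1 <| h _ (fun j hj => by simp [hy j hj, hy' j hj]) fun i hi => by
    simp [mulVec_sub, hyy' i hi]

theorem kronecker {B : Matrix m' n' K} {I : Finset n} {J : Finset n'} {V : Finset m}
    {W : Finset m'} (hA : A.IsSamplingSet I V) (hB : B.IsSamplingSet J W) :
    (A ⊗ₖ B).IsSamplingSet (I ×ˢ J) (V ×ˢ W) := by
  intro z hz hzVW
  -- With `Z i j = z (i, j)` the product is `A Z Bᵀ`: the columns of `Z Bᵀ` indexed by `W`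
  -- vanish by `hA`, and then the rows of `Z` vanish by `hB`.
  have hrow : ∀ i, ∀ j ∉ J, z (i, j) = 0 := fun i j hj => hz _ fun h => hj (mem_product.1 h).2
  have hcol : ∀ t ∈ W, (fun i => (B *ᵥ fun j => z (i, j)) t) = 0 := fun t ht =>
    hA _ (fun i hi => by simp [mulVec, dotProduct, hz (i, _) fun h => hi (mem_product.1 h).1])
      fun v hv => by rw [← kronecker_mulVec_apply]; exact hzVW _ (mem_product.2 ⟨hv, ht⟩)
  funext ⟨i, j⟩
  exact congrFun (hB _ (hrow i) fun t ht => congrFun (hcol t ht) i) j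

end CommRing

theorem exists_subset_card_eq [Field K] {A : Matrix m n K} {Ω : Finset n} {S : Finset m}
    (h : A.IsSamplingSet Ω S) : ∃ S' ⊆ S, S'.card = Ω.card ∧ A.IsSamplingSet Ω S' := by
  classical
  let E := Function.ExtendByZero.linearMap K ((↑) : Ω → n)
  have hE_supp : ∀ a, ∀ j ∉ Ω, E a j = 0 := fun a j hj => by
    simp only [E, Function.ExtendByZero.linearMap_apply]
    exact Function.extend_apply' _ _ _ fun ⟨k, hk⟩ => hj (hk ▸ k.2)
  have hE_restrict : ∀ z : n → K, (∀ j ∉ Ω, z j = 0) → E (fun j : Ω => z j) = z := fun z hz => by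
    funext j
    by_cases hj : j ∈ Ω
    · simpa [E] using Subtype.val_injective.extend_apply (fun j : Ω => z j) 0 ⟨j, hj⟩
    · rw [hE_supp _ j hj, hz j hj]
  have hE_inj : Function.Injective E := fun a b hab => funext fun j => by
    simpa [E, Subtype.val_injective.extend_apply] using congrFun hab j
  let φ : m → Dual K (Ω → K) := fun i => LinearMap.proj i ∘ₗ A.mulVecLin ∘ₗ E
  obtain ⟨S', hS'S, hcard, hS'⟩ := Dual.exists_finset_card_eq_finrank φ S fun a ha =>
    hE_inj <| by simpa using h _ (hE_supp a) ha
  refine ⟨S', by exact_mod_cast hS'S, by simpa using hcard, fun z hz hzS' => ?_⟩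
  have hz0 := hS' (fun j : Ω => z j) fun i hi => by simpa [φ, hE_restrict z hz] using hzS' i hi
  rw [← hE_restrict z hz, hz0, map_zero]

end IsSamplingSet

end Matrix

/-- critical sampling is achievable: there is a sampling set S with
exactly B samples determining every element of the model class, and the set of
sampled vertices has cardinality at most B_G. -/
theorem stmt13 {N T B B_G : ℕ}
    (U_G : Matrix (Fin N) (Fin N) ℂ) (U_T : Matrix (Fin T) (Fin T) ℂ)
    (hUG : U_G ∈ Matrix.unitaryGroup (Fin N) ℂ)
    (hUT : U_T ∈ Matrix.unitaryGroup (Fin T) ℂ)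
    (I : Finset (Fin N)) (𝓕 : Finset (Fin T))
    (𝒩 : Finset (Fin N × Fin T)) (hsub : 𝒩 ⊆ I ×ˢ 𝓕)
    (hI : I.card = B_G) (h𝒩 : 𝒩.card = B) :
    ∃ S : Finset (Fin N × Fin T), S.card = B ∧
      (∀ y y' : Fin N × Fin T → ℂ,
        (∀ q ∉ 𝒩, y q = 0) → (∀ q ∉ 𝒩, y' q = 0) →
        (∀ s ∈ S, (U_G ⊗ₖ U_T).mulVec y s = (U_G ⊗ₖ U_T).mulVec y' s) →
        (U_G ⊗ₖ U_T).mulVec y = (U_G ⊗ₖ U_T).mulVec y') ∧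
      (S.image Prod.fst).card ≤ B_G := by
  obtain ⟨V', -, hV'card, hV'⟩ :=
    (IsSamplingSet.univ_of_mul_eq_one (mem_unitaryGroup_iff'.mp hUG) I).exists_subset_card_eq
  have hT := IsSamplingSet.univ_of_mul_eq_one (mem_unitaryGroup_iff'.mp hUT) 𝓕
  obtain ⟨S, hSV', hScard, hS⟩ :=
    ((hV'.kronecker hT).of_support_subset hsub).exists_subset_card_eq
  refine ⟨S, hScard.trans h𝒩,
    fun y y' hy hy' hyy' => congrArg _ (hS.eq_of_mulVec_eq_on hy hy' hyy'), ?_⟩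
  calc (S.image Prod.fst).card ≤ V'.card :=
        card_le_card <| image_subset_iff.2 fun s hs => (mem_product.1 (hSV' hs)).1
    _ = B_G := hV'card.trans hI
end

section
/- For the FTVGS per-vertex bound: under the assumptions of the FTVGS sampling theorem with Θ = {v} a single vertex, the number of required samples on vertex v satisfies |S_v| ≥ B − rank(Ψ_θᶜ U_J(S_G'×V_T, ·) Ψ_j^H), hence R_F(S_v) = |S_v|/T ≥ (B − rank(Ψ_θᶜ U_J(S_G'×V_T,·) Ψ_j^H))/T. -/
open Matrix Finset

/-- per-vertex bound: if x = A c is determined by its values off vertex v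
together with samples S_v on vertex v, then |S_v| ≥ B − rank(A restricted to the rows
off vertex v), hence |S_v|/T ≥ (B − rank)/T. -/
theorem stmt17 {G T B : ℕ}
    (A : Matrix (Fin G × Fin T) (Fin B) ℂ) (hA : A.rank = B)
    (v : Fin G) (S_v : Finset (Fin T))
    (hdet : ∀ c c' : Fin B → ℂ,
      (∀ (w : Fin G) (t : Fin T), w ≠ v → A.mulVec c (w, t) = A.mulVec c' (w, t)) →
      (∀ t ∈ S_v, A.mulVec c (v, t) = A.mulVec c' (v, t)) →
      A.mulVec c = A.mulVec c')
    (r : ℕ)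
    (hr : r = (Matrix.of fun (i : {p : Fin G × Fin T // p.1 ≠ v}) (j : Fin B) =>
        A i.1 j).rank) :
    B - r ≤ S_v.card ∧ ((B - r : ℕ) : ℝ) / T ≤ (S_v.card : ℝ) / T := by
  have key : B - r ≤ S_v.card := by
    -- matrices of the two row groups
    set A₁ : Matrix {p : Fin G × Fin T // p.1 ≠ v} (Fin B) ℂ :=
      Matrix.of fun i j => A i.1 j with hA₁
    set A₂ : Matrix {t : Fin T // t ∈ S_v} (Fin B) ℂ :=
      Matrix.of fun t j => A (v, t.1) j with hA₂
    have hBfin : Module.finrank ℂ (Fin B → ℂ) = B := by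
      simp [Module.finrank_pi]
    -- A is injective
    have hAker : LinearMap.ker A.mulVecLin = ⊥ := by
      have h1 := LinearMap.finrank_range_add_finrank_ker A.mulVecLin
      rw [hBfin] at h1
      have : A.rank + Module.finrank ℂ (LinearMap.ker A.mulVecLin) = B := h1
      rw [hA] at this
      have h0 : Module.finrank ℂ (LinearMap.ker A.mulVecLin) = 0 := by omega
      exact Submodule.finrank_eq_zero.mp h0
    have hAinj : Function.Injective A.mulVecLin :=
      LinearMap.ker_eq_bot.mp hAker
    -- dimension count for A₁
    have h1 := LinearMap.finrank_range_add_finrank_ker A₁.mulVecLin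
    rw [hBfin] at h1
    have hrk : A₁.rank + Module.finrank ℂ (LinearMap.ker A₁.mulVecLin) = B := h1
    -- restriction of A₂ to ker A₁ is injective
    set K := LinearMap.ker A₁.mulVecLin
    have hinj : Function.Injective (A₂.mulVecLin.domRestrict K) := by
      rw [← LinearMap.ker_eq_bot]
      rw [Submodule.eq_bot_iff]
      intro x hx
      have hx2 : A₂.mulVec (x : Fin B → ℂ) = 0 := hx
      have hx1 : A₁.mulVec (x : Fin B → ℂ) = 0 := x.2
      have hAx : A.mulVec (x : Fin B → ℂ) = A.mulVec 0 := by
        apply hdet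
        · intro w t hw
          have := congrFun hx1 ⟨(w, t), hw⟩
          simpa [Matrix.mulVec, hA₁, dotProduct] using this
        · intro t ht
          have := congrFun hx2 ⟨t, ht⟩
          simpa [Matrix.mulVec, hA₂, dotProduct] using this
      have : (x : Fin B → ℂ) = 0 := by
        apply hAinj
        simpa using hAx
      exact Subtype.ext this
    -- so finrank K ≤ |S_v|
    have hKle : Module.finrank ℂ K ≤ S_v.card := by
      have := LinearMap.finrank_range_of_inj hinj
      have hle : Module.finrank ℂ (LinearMap.range (A₂.mulVecLin.domRestrict K))
          ≤ Module.finrank ℂ ({t : Fin T // t ∈ S_v} → ℂ) :=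
        Submodule.finrank_le _
      rw [this] at hle
      simpa [Module.finrank_pi, Fintype.card_coe] using hle
    -- conclude
    have : B = r + Module.finrank ℂ K := by rw [hr]; omega
    omega
  refine ⟨key, ?_⟩
  rw [div_eq_mul_inv, div_eq_mul_inv]
  apply mul_le_mul_of_nonneg_right
  · exact_mod_cast key
  · positivity
end
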